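/- Let 0 < q < 1. The family of elements (x x*)^k x^l with k ≥ 0 and l ∈ ℤ, where x^{−m} denotes (x*)^m for m > 0, is a vector space basis of the ℂ-vector space P(D_q). -/

import Mathlib

noncomputable section

/-- The free algebra ℂ⟨x, x*⟩ on two generators (generator 0 is `x`, generator 1 is `x*`). -/
abbrev FreeDisc : Type := FreeAlgebra ℂ (Fin 2)

/-- The defining relation of the quantum disc: x* x = q x x* + (1 - q)·1. -/
def discRel (q : ℝ) : FreeDisc → FreeDisc → Prop := fun a b =>
  a = FreeAlgebra.ι ℂ (1 : Fin 2) * FreeAlgebra.ι ℂ (0 : Fin 2) ∧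
  b = (q : ℂ) • (FreeAlgebra.ι ℂ (0 : Fin 2) * FreeAlgebra.ι ℂ (1 : Fin 2)) +
      ((1 : ℂ) - (q : ℂ)) • 1

/-- The polynomial quantum disc algebra P(D_q). -/
abbrev QDisc (q : ℝ) : Type := RingQuot (discRel q)

/-- The generator x of P(D_q). -/
def xq (q : ℝ) : QDisc q := RingQuot.mkAlgHom ℂ (discRel q) (FreeAlgebra.ι ℂ 0)

/-- The generator x* of P(D_q). -/
def xsq (q : ℝ) : QDisc q := RingQuot.mkAlgHom ℂ (discRel q) (FreeAlgebra.ι ℂ 1)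

/-- The power x^l for l ∈ ℤ, with the convention x^{-m} = (x*)^m for m > 0. -/
def xzpow (q : ℝ) (l : ℤ) : QDisc q :=
  if 0 ≤ l then xq q ^ l.toNat else xsq q ^ (-l).toNat

/-!
The span of the family contains `1` and is stable under right multiplication by `x` and `x*`.
Indeed `z = x x*` satisfies `x* z = q z x* + (1 - q) x*` and `x z = q⁻¹ z x + (1 - q⁻¹) x`;
iterating these gives `x*^(m+1) x = q^(m+1) z x*^m + (1 - q^(m+1)) x*^m` and
`x^(m+1) x* = q^(-m) z x^m + (1 - q^(-m)) x^m`.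

For independence, let `P(D_q)` act on `⊕_{n ∈ ℤ} ℂ[T] e_n` by `x e_n = e_(n+1)` and
`x* e_n = (1 - q^n T) e_(n-1)`. Then `(x x*)^k x^l e_0 = (1 - q^l T)^k u_l e_l` with `u_l ≠ 0`:
vectors with different `l` lie in different summands, and for fixed `l` they have distinct
degrees in `T`.
-/

open Polynomial Set Submodule

theorem pow_mul_eq_of_mul_eq {R A : Type*} [CommRing R] [Ring A] [Algebra R A] {a b : A} {c : R}
    (h : a * b = c • (b * a) + (1 - c) • a) (m : ℕ) :
    a ^ m * b = c ^ m • (b * a ^ m) + (1 - c ^ m) • a ^ m := by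
  induction m with
  | zero => simp
  | succ m ih =>
    calc a ^ (m + 1) * b = a * (a ^ m * b) := by rw [pow_succ', mul_assoc]
      _ = c ^ m • ((a * b) * a ^ m) + (1 - c ^ m) • a ^ (m + 1) := by
        rw [ih, mul_add, mul_smul_comm, mul_smul_comm, ← mul_assoc, ← pow_succ']
      _ = c ^ (m + 1) • (b * a ^ (m + 1)) + (1 - c ^ (m + 1)) • a ^ (m + 1) := by
        rw [h, add_mul, smul_mul_assoc, smul_mul_assoc, mul_assoc, ← pow_succ']
        match_scalars <;> ring

theorem Polynomial.linearIndependent_pow_mul {R : Type*} [CommRing R] [IsDomain R] {p u : R[X]}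
    (hp : p.degree = 1) (hu : u ≠ 0) : LinearIndependent R fun k : ℕ => p ^ k * u := by
  let powers : Polynomial.Sequence R := ⟨fun k => p ^ k, fun k => by simp [degree_pow, hp]⟩
  exact powers.linearIndependent.map' (LinearMap.mulRight R u)
    (LinearMap.ker_eq_bot.mpr (mul_left_injective₀ hu))

namespace QDisc

variable {q : ℝ}

theorem xsq_mul_xq : xsq q * xq q = (q : ℂ) • (xq q * xsq q) + (1 - (q : ℂ)) • 1 := by
  have h := RingQuot.mkAlgHom_rel ℂ (s := discRel q) ⟨rfl, rfl⟩
  simp only [map_add, map_smul, map_mul, map_one] at h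
  exact h

theorem xsq_mul_xq_mul_xsq :
    xsq q * (xq q * xsq q) = (q : ℂ) • (xq q * xsq q * xsq q) + (1 - (q : ℂ)) • xsq q := by
  rw [← mul_assoc, xsq_mul_xq, add_mul, smul_mul_assoc, smul_mul_assoc, one_mul]

theorem xq_mul_xq_mul_xsq (hq : q ≠ 0) :
    xq q * (xq q * xsq q)
      = (q : ℂ)⁻¹ • (xq q * xsq q * xq q) + (1 - (q : ℂ)⁻¹) • xq q := by
  have hq' : (q : ℂ) ≠ 0 := by exact_mod_cast hq
  rw [mul_assoc, xsq_mul_xq, mul_add, mul_smul_comm, mul_smul_comm, mul_one, smul_add, smul_smul,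
    inv_mul_cancel₀ hq', one_smul, smul_smul]
  match_scalars
  · field_simp
  · field_simp; ring

theorem xsq_pow_succ_mul_xq (m : ℕ) :
    xsq q ^ (m + 1) * xq q = (q : ℂ) ^ (m + 1) • (xq q * xsq q * xsq q ^ m)
      + (1 - (q : ℂ) ^ (m + 1)) • xsq q ^ m := by
  rw [pow_succ, mul_assoc, xsq_mul_xq, mul_add, mul_smul_comm, mul_smul_comm, mul_one,
    pow_mul_eq_of_mul_eq xsq_mul_xq_mul_xsq]
  match_scalars <;> ring

theorem xq_pow_succ_mul_xsq (hq : q ≠ 0) (m : ℕ) :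
    xq q ^ (m + 1) * xsq q = (q : ℂ)⁻¹ ^ m • (xq q * xsq q * xq q ^ m)
      + (1 - (q : ℂ)⁻¹ ^ m) • xq q ^ m := by
  rw [pow_succ, mul_assoc, pow_mul_eq_of_mul_eq (xq_mul_xq_mul_xsq hq)]

theorem xzpow_natCast (n : ℕ) : xzpow q n = xq q ^ n := by
  simp [xzpow]

theorem xzpow_neg_natCast (n : ℕ) : xzpow q (-n) = xsq q ^ n := by
  rcases n with _ | n
  · simp [xzpow]
  · rw [xzpow, if_neg (by omega), neg_neg, Int.toNat_natCast]

theorem xzpow_mul_xq (l : ℤ) : ∃ a b : ℂ,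
    xzpow q l * xq q = a • (xq q * xsq q * xzpow q (l + 1)) + b • xzpow q (l + 1) := by
  obtain ⟨n, rfl | rfl⟩ := Int.eq_nat_or_neg l
  · refine ⟨0, 1, ?_⟩
    rw [xzpow_natCast, ← Nat.cast_succ, xzpow_natCast, pow_succ, zero_smul, zero_add, one_smul]
  · rcases n with _ | m
    · refine ⟨0, 1, ?_⟩
      simp [xzpow]
    · have hl : -((m + 1 : ℕ) : ℤ) + 1 = -(m : ℤ) := by push_cast; ring
      rw [xzpow_neg_natCast, hl, xzpow_neg_natCast, xsq_pow_succ_mul_xq]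
      exact ⟨_, _, rfl⟩

theorem xzpow_mul_xsq (hq : q ≠ 0) (l : ℤ) : ∃ a b : ℂ,
    xzpow q l * xsq q = a • (xq q * xsq q * xzpow q (l - 1)) + b • xzpow q (l - 1) := by
  obtain ⟨n, rfl | rfl⟩ := Int.eq_nat_or_neg l
  · rcases n with _ | m
    · refine ⟨0, 1, ?_⟩
      simp [xzpow]
    · have hl : ((m + 1 : ℕ) : ℤ) - 1 = m := by push_cast; ring
      rw [xzpow_natCast, hl, xzpow_natCast, xq_pow_succ_mul_xsq hq]
      exact ⟨_, _, rfl⟩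
  · refine ⟨0, 1, ?_⟩
    have hl : -(n : ℤ) - 1 = -((n + 1 : ℕ) : ℤ) := by push_cast; ring
    rw [hl, xzpow_neg_natCast, xzpow_neg_natCast, pow_succ, zero_smul, zero_add, one_smul]

def basisFamily (q : ℝ) (kl : ℕ × ℤ) : QDisc q := (xq q * xsq q) ^ kl.1 * xzpow q kl.2

theorem mul_mem_span_basisFamily {g : QDisc q} (hg : ∀ l : ℤ, ∃ l' : ℤ, ∃ a b : ℂ,
      xzpow q l * g = a • (xq q * xsq q * xzpow q l') + b • xzpow q l')
    {s : QDisc q} (hs : s ∈ span ℂ (range (basisFamily q))) :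
    s * g ∈ span ℂ (range (basisFamily q)) := by
  suffices span ℂ (range (basisFamily q)) ≤
      (span ℂ (range (basisFamily q))).comap (LinearMap.mulRight ℂ g) from this hs
  rw [span_le]
  rintro _ ⟨⟨k, l⟩, rfl⟩
  obtain ⟨l', a, b, h⟩ := hg l
  have hkl : basisFamily q (k, l) * g
      = a • basisFamily q (k + 1, l') + b • basisFamily q (k, l') := by
    simp only [basisFamily, mul_assoc, h, mul_add, mul_smul_comm, pow_succ]
  rw [SetLike.mem_coe, mem_comap, LinearMap.mulRight_apply, hkl]
  exact add_mem (smul_mem _ _ (subset_span ⟨_, rfl⟩)) (smul_mem _ _ (subset_span ⟨_, rfl⟩))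

theorem adjoin_xq_xsq : Algebra.adjoin ℂ {xq q, xsq q} = ⊤ := by
  have h : ({xq q, xsq q} : Set (QDisc q)) =
      RingQuot.mkAlgHom ℂ (discRel q) '' range (FreeAlgebra.ι ℂ) := by
    ext; simp [Fin.exists_fin_two, xq, xsq, eq_comm]
  rw [h, Algebra.adjoin_image, FreeAlgebra.adjoin_range_ι, Algebra.map_top,
    (AlgHom.range_eq_top _).mpr (RingQuot.mkAlgHom_surjective ℂ _)]

theorem span_basisFamily (hq : q ≠ 0) : span ℂ (range (basisFamily q)) = ⊤ := by
  rw [eq_top_iff, ← Algebra.top_toSubmodule, ← adjoin_xq_xsq, Algebra.adjoin_toSubmodule_le]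
  intro m hm
  induction hm using Submonoid.closure_induction_right with
  | one => exact subset_span ⟨(0, 0), by simp [basisFamily, xzpow]⟩
  | mul_right x _ y hy hx =>
    rcases hy with rfl | rfl
    · exact mul_mem_span_basisFamily (fun l => ⟨l + 1, xzpow_mul_xq l⟩) hx
    · exact mul_mem_span_basisFamily (fun l => ⟨l - 1, xzpow_mul_xsq hq l⟩) hx

def weight (q : ℝ) (n : ℤ) : ℂ[X] := 1 - C ((q : ℂ) ^ n) * X

theorem weight_add_one (hq : q ≠ 0) (n : ℤ) :
    weight q (n + 1) = C (q : ℂ) * weight q n + C (1 - (q : ℂ)) := by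
  have hq' : (q : ℂ) ≠ 0 := by exact_mod_cast hq
  simp only [weight, zpow_add_one₀ hq', C_mul, C_sub, C_1]
  ring

theorem weight_ne_zero (n : ℤ) : weight q n ≠ 0 := fun h => by
  simpa [weight] using congrArg (eval 0) h

theorem degree_weight (hq : q ≠ 0) (n : ℤ) : (weight q n).degree = 1 := by
  have hq' : q ^ n ≠ 0 := zpow_ne_zero _ hq
  unfold weight
  compute_degree!

def raise : Module.End ℂ (ℤ →₀ ℂ[X]) := Finsupp.lmapDomain ℂ[X] ℂ (· + 1)

def lower (q : ℝ) : Module.End ℂ (ℤ →₀ ℂ[X]) :=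
  Finsupp.lsum ℂ fun n => Finsupp.lsingle (n - 1) ∘ₗ LinearMap.mulLeft ℂ (weight q n)

theorem raise_single (n : ℤ) (p : ℂ[X]) :
    raise (Finsupp.single n p) = Finsupp.single (n + 1) p := by
  simp [raise, Finsupp.mapDomain_single]

theorem lower_single (n : ℤ) (p : ℂ[X]) :
    lower q (Finsupp.single n p) = Finsupp.single (n - 1) (weight q n * p) := by
  simp [lower]

theorem lower_mul_raise (hq : q ≠ 0) :
    lower q * raise = (q : ℂ) • (raise * lower q) + (1 - (q : ℂ)) • 1 := by
  refine Finsupp.lhom_ext fun n p => ?_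
  simp only [Module.End.mul_apply, LinearMap.add_apply, LinearMap.smul_apply, Module.End.one_apply,
    raise_single, lower_single, add_sub_cancel_right, sub_add_cancel, weight_add_one hq,
    Finsupp.smul_single, ← Finsupp.single_add, Polynomial.smul_eq_C_mul]
  ring_nf

def rep (hq : q ≠ 0) : QDisc q →ₐ[ℂ] Module.End ℂ (ℤ →₀ ℂ[X]) :=
  RingQuot.liftAlgHom ℂ ⟨FreeAlgebra.lift ℂ ![raise, lower q], by
    rintro _ _ ⟨rfl, rfl⟩
    simp only [map_mul, map_add, map_smul, map_one, FreeAlgebra.lift_ι_apply,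
      Matrix.cons_val_zero, Matrix.cons_val_one]
    exact lower_mul_raise hq⟩

theorem rep_xq (hq : q ≠ 0) : rep hq (xq q) = raise := by
  simp [rep, xq]

theorem rep_xsq (hq : q ≠ 0) : rep hq (xsq q) = lower q := by
  simp [rep, xsq]

theorem rep_xq_mul_xsq_pow_single (hq : q ≠ 0) (k : ℕ) (n : ℤ) (p : ℂ[X]) :
    rep hq ((xq q * xsq q) ^ k) (Finsupp.single n p) = Finsupp.single n (weight q n ^ k * p) := by
  induction k with
  | zero => simp
  | succ k ih =>
    rw [pow_succ', map_mul, Module.End.mul_apply, ih, map_mul, rep_xq, rep_xsq,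
      Module.End.mul_apply, lower_single, raise_single, sub_add_cancel, pow_succ', mul_assoc]

theorem exists_rep_xzpow_single_zero (hq : q ≠ 0) (l : ℤ) :
    ∃ u : ℂ[X], u ≠ 0 ∧ rep hq (xzpow q l) (Finsupp.single 0 1) = Finsupp.single l u := by
  obtain ⟨n, rfl | rfl⟩ := Int.eq_nat_or_neg l
  · refine ⟨1, one_ne_zero, ?_⟩
    rw [xzpow_natCast, map_pow, rep_xq]
    induction n with
    | zero => simp
    | succ n ih => rw [pow_succ', Module.End.mul_apply, ih, raise_single, Nat.cast_succ]
  · rw [xzpow_neg_natCast, map_pow, rep_xsq]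
    induction n with
    | zero => exact ⟨1, one_ne_zero, by simp⟩
    | succ n ih =>
      obtain ⟨u, hu, h⟩ := ih
      refine ⟨weight q (-n) * u, mul_ne_zero (weight_ne_zero _) hu, ?_⟩
      rw [pow_succ', Module.End.mul_apply, h, lower_single]
      congr 1
      push_cast
      ring

theorem exists_rep_basisFamily_single_zero (hq : q ≠ 0) (l : ℤ) :
    ∃ u : ℂ[X], u ≠ 0 ∧ ∀ k : ℕ,
      rep hq (basisFamily q (k, l)) (Finsupp.single 0 1)
        = Finsupp.single l (weight q l ^ k * u) := by
  obtain ⟨u, hu, h⟩ := exists_rep_xzpow_single_zero hq l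
  exact ⟨u, hu, fun k => by
    rw [basisFamily, map_mul, Module.End.mul_apply, h, rep_xq_mul_xsq_pow_single]⟩

theorem linearIndependent_basisFamily (hq : q ≠ 0) : LinearIndependent ℂ (basisFamily q) := by
  choose u hu0 hu using exists_rep_basisFamily_single_zero hq
  have hsigma : LinearIndependent ℂ fun lk : Σ _ : ℤ, ℕ =>
      Finsupp.single lk.1 (weight q lk.1 ^ lk.2 * u lk.1) :=
    Finsupp.linearIndependent_single (φ := fun _ => ℕ) (fun l k => weight q l ^ k * u l)
      fun l => linearIndependent_pow_mul (degree_weight hq l) (hu0 l)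
  have hsingle : LinearIndependent ℂ fun kl : ℕ × ℤ =>
      Finsupp.single kl.2 (weight q kl.2 ^ kl.1 * u kl.2) :=
    hsigma.comp (fun kl : ℕ × ℤ => (⟨kl.2, kl.1⟩ : Σ _ : ℤ, ℕ)) fun a b h => by
      simp only [Sigma.mk.inj_iff, heq_eq_eq] at h
      exact Prod.ext h.2 h.1
  have hcomp :
      (LinearMap.applyₗ (Finsupp.single 0 1) ∘ₗ (rep hq).toLinearMap) ∘ basisFamily q =
      fun kl : ℕ × ℤ => Finsupp.single kl.2 (weight q kl.2 ^ kl.1 * u kl.2) :=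
    funext fun kl => hu kl.2 kl.1
  exact LinearIndependent.of_comp _ (hcomp ▸ hsingle)

end QDisc

theorem qdisc_second_basis_general (q : ℝ) (hq0 : 0 < q) :
    LinearIndependent ℂ (fun kl : ℕ × ℤ => (xq q * xsq q) ^ kl.1 * xzpow q kl.2) ∧
    Submodule.span ℂ (Set.range fun kl : ℕ × ℤ => (xq q * xsq q) ^ kl.1 * xzpow q kl.2)
      = ⊤ :=
  ⟨QDisc.linearIndependent_basisFamily hq0.ne', QDisc.span_basisFamily hq0.ne'⟩

/-- For 0 < q < 1, the elements (x x*)^k x^l, k ≥ 0, l ∈ ℤ (where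
x^{-m} = (x*)^m for m > 0) form a vector space basis of P(D_q). -/
theorem qdisc_second_basis (q : ℝ) (hq0 : 0 < q) (hq1 : q < 1) :
    LinearIndependent ℂ (fun kl : ℕ × ℤ => (xq q * xsq q) ^ kl.1 * xzpow q kl.2) ∧
    Submodule.span ℂ (Set.range fun kl : ℕ × ℤ => (xq q * xsq q) ^ kl.1 * xzpow q kl.2)
      = ⊤ :=
  qdisc_second_basis_general q hq0
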